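/- arXiv:2509.04654 — 3 statements merged into one kernel-verified Lean document; each statement's English description precedes it below -/
import Mathlib

section
/- Let (W, r_1, …, r_n) be a Strip Packing instance whose rectangles are listed in the FQW-ordering with Q ≠ ∅, and consider its BL packing. For every i with L + 1 ≤ i ≤ a + b, either the region H_i of the horizontal strip partition is contained in H', or every proper horizontal line in H_i has occupied fraction at least 1/2. -/
open scoped Classical
open MeasureTheory

/-- An axis-parallel rectangle, given by its width and its height. -/
structure Rect where
  w : ℝ
  h : ℝ

/-- A Strip Packing instance: a strip of width `W > 0` and `n` rectangles
`r 0, …, r (n-1)`, each with positive height and width at most `W`. -/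
structure SPInstance (n : ℕ) where
  W : ℝ
  r : Fin n → Rect
  W_pos : 0 < W
  w_pos : ∀ i, 0 < (r i).w
  w_le_W : ∀ i, (r i).w ≤ W
  h_pos : ∀ i, 0 < (r i).h

/-- The open box of rectangle `R` placed at position `p`. -/
def openBox (R : Rect) (p : ℝ × ℝ) : Set (ℝ × ℝ) :=
  Set.Ioo p.1 (p.1 + R.w) ×ˢ Set.Ioo p.2 (p.2 + R.h)

/-- The closed box of rectangle `R` placed at position `p`. -/
def closedBox (R : Rect) (p : ℝ × ℝ) : Set (ℝ × ℝ) :=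
  Set.Icc p.1 (p.1 + R.w) ×ˢ Set.Icc p.2 (p.2 + R.h)

namespace SPInstance

variable {n : ℕ}

/-- Rectangle `i` placed at `p` lies inside the strip. -/
def InStrip (I : SPInstance n) (i : Fin n) (p : ℝ × ℝ) : Prop :=
  0 ≤ p.1 ∧ p.1 + (I.r i).w ≤ I.W ∧ 0 ≤ p.2

/-- `pos` is a feasible packing: each rectangle lies in the strip and the open
boxes are pairwise disjoint. -/
def Feasible (I : SPInstance n) (pos : Fin n → ℝ × ℝ) : Prop :=
  (∀ i, I.InStrip i (pos i)) ∧
    Pairwise (fun i j : Fin n =>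
      Disjoint (openBox (I.r i) (pos i)) (openBox (I.r j) (pos j)))

/-- The height of a packing, `max_i (y_i + h_i)`. -/
noncomputable def height (I : SPInstance n) (pos : Fin n → ℝ × ℝ) : ℝ :=
  ⨆ i, ((pos i).2 + (I.r i).h)

/-- The minimum height of a feasible packing. -/
noncomputable def hOPT (I : SPInstance n) : ℝ :=
  sInf {H | ∃ pos, I.Feasible pos ∧ I.height pos = H}

/-- The maximum height of a rectangle of the instance. -/
noncomputable def hmax (I : SPInstance n) : ℝ :=
  ⨆ i, (I.r i).h

/-- Rectangle `i` can feasibly be placed at `p`, given the rectangles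
`j < i` already placed at `pos j`. -/
def FeasibleAt (I : SPInstance n) (pos : Fin n → ℝ × ℝ) (i : Fin n) (p : ℝ × ℝ) : Prop :=
  I.InStrip i p ∧ ∀ j : Fin n, j < i →
    Disjoint (openBox (I.r i) p) (openBox (I.r j) (pos j))

/-- `pos` is the Bottom-Left packing for the ordering `r 0, r 1, …`: every
rectangle is feasibly placed, at the lexicographically minimal `(y, x)`. -/
def IsBL (I : SPInstance n) (pos : Fin n → ℝ × ℝ) : Prop :=
  ∀ i : Fin n, I.FeasibleAt pos i (pos i) ∧
    ∀ p : ℝ × ℝ, I.FeasibleAt pos i p →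
      (pos i).2 < p.2 ∨ ((pos i).2 = p.2 ∧ (pos i).1 ≤ p.1)

/-- Greedy construction of the set `F` of the FQW-partition, processing the
rectangles in the order `σ 0, σ 1, …` and adding a rectangle whenever the
total width of `F` stays at most `W`. -/
noncomputable def greedyF (I : SPInstance n) (σ : Equiv.Perm (Fin n)) : Finset (Fin n) :=
  (List.finRange n).foldl
    (fun F k =>
      if (I.r (σ k)).w + ∑ f ∈ F, (I.r f).w ≤ I.W then insert (σ k) F else F) ∅

end SPInstance

/-- An FQW-partition datum: a processing order `σ` of the rectangles that is
sorted by decreasing height. -/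
structure FQW {n : ℕ} (I : SPInstance n) where
  σ : Equiv.Perm (Fin n)
  sorted : ∀ k k' : Fin n, k ≤ k' → (I.r (σ k')).h ≤ (I.r (σ k)).h

namespace FQW

variable {n : ℕ} {I : SPInstance n}

/-- The set `F` of the FQW-partition. -/
noncomputable def F (d : FQW I) : Finset (Fin n) := I.greedyF d.σ

/-- The set `𝒲` of the FQW-partition: rectangles not in `F` of width
greater than `W/2`. -/
noncomputable def Wset (d : FQW I) : Finset (Fin n) :=
  Finset.univ.filter fun i => i ∉ d.F ∧ I.W / 2 < (I.r i).w

/-- The set `Q` of the FQW-partition: all remaining rectangles. -/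
noncomputable def Q (d : FQW I) : Finset (Fin n) :=
  Finset.univ.filter fun i => i ∉ d.F ∧ ¬ I.W / 2 < (I.r i).w

/-- The rectangles of the instance are listed in the FQW-ordering: first `F`
sorted by decreasing height, then `Q` sorted by decreasing width, then `𝒲`. -/
def IsOrdered (d : FQW I) : Prop :=
  (∀ i : Fin n, i ∈ d.F ↔ (i : ℕ) < d.F.card) ∧
  (∀ i : Fin n, i ∈ d.Q ↔ d.F.card ≤ (i : ℕ) ∧ (i : ℕ) < d.F.card + d.Q.card) ∧
  (∀ i j : Fin n, (i : ℕ) ≤ (j : ℕ) → (j : ℕ) < d.F.card → (I.r j).h ≤ (I.r i).h) ∧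
  (∀ i j : Fin n, d.F.card ≤ (i : ℕ) → (i : ℕ) ≤ (j : ℕ) →
    (j : ℕ) < d.F.card + d.Q.card → (I.r j).w ≤ (I.r i).w)

end FQW

/-- `max {y_{r_1}, …, y_{r_i}}` (the first `i` rectangles, `0` if `i = 0`):
the lower boundary of the region `H_{i+1}` of the horizontal strip partition. -/
noncomputable def maxYBelow {n : ℕ} (pos : Fin n → ℝ × ℝ) (i : ℕ) : ℝ :=
  ⨆ j : {j : Fin n // (j : ℕ) < i}, (pos (j : Fin n)).2

namespace SPInstance

variable {n : ℕ}

/-- The horizontal line at height `t` is proper: it meets no top or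
bottom face of a rectangle. -/
def ProperLine (I : SPInstance n) (pos : Fin n → ℝ × ℝ) (t : ℝ) : Prop :=
  ∀ j : Fin n, t ≠ (pos j).2 ∧ t ≠ (pos j).2 + (I.r j).h

/-- Rectangle `j` intersects the horizontal line at height `t`. -/
def Intersects (I : SPInstance n) (pos : Fin n → ℝ × ℝ) (j : Fin n) (t : ℝ) : Prop :=
  (pos j).2 < t ∧ t < (pos j).2 + (I.r j).h

/-- The occupied part of the horizontal line at height `t`. -/
noncomputable def occupied (I : SPInstance n) (pos : Fin n → ℝ × ℝ) (t : ℝ) : Set ℝ :=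
  ⋃ j ∈ {j : Fin n | I.Intersects pos j t}, Set.Icc (pos j).1 ((pos j).1 + (I.r j).w)

/-- The occupied fraction of the horizontal line at height `t`. -/
noncomputable def occFrac (I : SPInstance n) (pos : Fin n → ℝ × ℝ) (t : ℝ) : ℝ :=
  (volume (I.occupied pos t)).toReal / I.W

/-- The region `H_{i+1}` (for the `0`-based index `i`) of the horizontal strip
partition: `[0, W] × [max {y_{r_1}, …, y_{r_i}}, y_{r_{i+1}})`. -/
def regionH (I : SPInstance n) (pos : Fin n → ℝ × ℝ) (i : Fin n) : Set (ℝ × ℝ) :=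
  Set.Icc 0 I.W ×ˢ Set.Ico (maxYBelow pos (i : ℕ)) (pos i).2

/-- `G` is an unoccupied gap of the horizontal line at height `t`: a maximal
subinterval of `[0, W]` disjoint from the occupied part of the line. -/
def IsGap (I : SPInstance n) (pos : Fin n → ℝ × ℝ) (t : ℝ) (G : Set ℝ) : Prop :=
  G.Nonempty ∧ G ⊆ Set.Icc 0 I.W ∧ G.OrdConnected ∧ Disjoint G (I.occupied pos t) ∧
    ∀ G' : Set ℝ, G'.OrdConnected → G' ⊆ Set.Icc 0 I.W →
      Disjoint G' (I.occupied pos t) → G ⊆ G' → G' = G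

/-- `j` is a left supporter of `i`: it comes before `i` in the ordering, its
right face touches the left face of `i`, and their open `y`-ranges intersect. -/
def IsLeftSupporter (I : SPInstance n) (pos : Fin n → ℝ × ℝ) (i j : Fin n) : Prop :=
  j < i ∧ (pos j).1 + (I.r j).w = (pos i).1 ∧
    (pos j).2 < (pos i).2 + (I.r i).h ∧ (pos i).2 < (pos j).2 + (I.r j).h

/-- `j` is a bottom supporter of `i`: it comes before `i` in the ordering, its
top face touches the bottom face of `i`, and their open `x`-ranges intersect. -/
def IsBottomSupporter (I : SPInstance n) (pos : Fin n → ℝ × ℝ) (i j : Fin n) : Prop :=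
  j < i ∧ (pos j).2 + (I.r j).h = (pos i).2 ∧
    (pos j).1 < (pos i).1 + (I.r i).w ∧ (pos i).1 < (pos j).1 + (I.r j).w

/-- `j` is the leftmost bottom supporter of `i`. -/
def IsLeftmostBottomSupporter (I : SPInstance n) (pos : Fin n → ℝ × ℝ)
    (i j : Fin n) : Prop :=
  I.IsBottomSupporter pos i j ∧
    ∀ j' : Fin n, I.IsBottomSupporter pos i j' → (pos j).1 ≤ (pos j').1

end SPInstance

/-- `iT` is the top rectangle `r_T` of `Q`: the rectangle of `Q` whose top face
is highest, ties broken by highest bottom face. -/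
def IsTopRect {n : ℕ} (I : SPInstance n) (d : FQW I) (pos : Fin n → ℝ × ℝ)
    (iT : Fin n) : Prop :=
  iT ∈ d.Q ∧ ∀ j ∈ d.Q,
    (pos j).2 + (I.r j).h < (pos iT).2 + (I.r iT).h ∨
    ((pos j).2 + (I.r j).h = (pos iT).2 + (I.r iT).h ∧ (pos j).2 ≤ (pos iT).2)

/-- `iL` is the left rectangle `r_L` of `Q`: the first rectangle of `Q` in the
ordering touching the left strip boundary, and `r_T` if there is none. -/
def IsLeftRect {n : ℕ} (I : SPInstance n) (d : FQW I) (pos : Fin n → ℝ × ℝ)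
    (iT iL : Fin n) : Prop :=
  (iL ∈ d.Q ∧ (pos iL).1 = 0 ∧ ∀ j ∈ d.Q, (pos j).1 = 0 → iL ≤ j) ∨
  ((∀ j ∈ d.Q, (pos j).1 ≠ 0) ∧ iL = iT)

/-- The region `H' = [0, W] × ([0, h_{r_T}] ∪ [y_{r_T}, y_{r_T} + h_{r_T}])`. -/
def Hprime {n : ℕ} (I : SPInstance n) (pos : Fin n → ℝ × ℝ) (iT : Fin n) :
    Set (ℝ × ℝ) :=
  Set.Icc 0 I.W ×ˢ
    (Set.Icc 0 (I.r iT).h ∪ Set.Icc (pos iT).2 ((pos iT).2 + (I.r iT).h))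

/-- The type `T(ℓ)` of the proper horizontal line at height `t`: the rectangles
of `Q` intersecting the line whose index is smaller than the least index `j`
with `y_{r_j} > t` (equivalently, all rectangles with index at most theirs have
bottom face at height at most `t`). -/
noncomputable def TypeOf {n : ℕ} (I : SPInstance n) (d : FQW I)
    (pos : Fin n → ℝ × ℝ) (t : ℝ) : Finset (Fin n) :=
  Finset.univ.filter fun i =>
    i ∈ d.Q ∧ I.Intersects pos i t ∧ ∀ j : Fin n, j ≤ i → (pos j).2 ≤ t

/-- `i` is `LM(ℓ)`: the rectangle of `T(ℓ)` with smallest `x`-coordinate. -/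
def IsLM {n : ℕ} (I : SPInstance n) (d : FQW I) (pos : Fin n → ℝ × ℝ) (t : ℝ)
    (i : Fin n) : Prop :=
  i ∈ TypeOf I d pos t ∧ ∀ j ∈ TypeOf I d pos t, (pos i).1 ≤ (pos j).1

/-- The horizontal line at height `t` lies in `H_{a+2} ∪ ⋯ ∪ H_L`, where `iL`
is the `0`-based index of `r_L` (so `L = iL + 1`, `1`-based). -/
def LineInHUnion {n : ℕ} (I : SPInstance n) (d : FQW I) (pos : Fin n → ℝ × ℝ)
    (iL : Fin n) (t : ℝ) : Prop :=
  ∃ m : Fin n, d.F.card + 1 ≤ (m : ℕ) ∧ m ≤ iL ∧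
    maxYBelow pos (m : ℕ) ≤ t ∧ t < (pos m).2

/-- The space `H_{a+2} ∪ ⋯ ∪ H_L`, where `iL` is the `0`-based index of `r_L`. -/
def regionHUnion {n : ℕ} (I : SPInstance n) (d : FQW I) (pos : Fin n → ℝ × ℝ)
    (iL : Fin n) : Set (ℝ × ℝ) :=
  ⋃ m ∈ {m : Fin n | d.F.card + 1 ≤ (m : ℕ) ∧ m ≤ iL}, I.regionH pos m

/-- The horizontal line at height `t` belongs to `L^k`: it is a proper line of
order `k` lying in `H_{a+2} ∪ ⋯ ∪ H_L`. -/
def InLk {n : ℕ} (I : SPInstance n) (d : FQW I) (pos : Fin n → ℝ × ℝ)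
    (iL : Fin n) (k : ℕ) (t : ℝ) : Prop :=
  I.ProperLine pos t ∧ LineInHUnion I d pos iL t ∧ (TypeOf I d pos t).card = k

/-- `i` belongs to `R^k`: it is `LM(ℓ)` for some line `ℓ ∈ L^k`. -/
def InRk {n : ℕ} (I : SPInstance n) (d : FQW I) (pos : Fin n → ℝ × ℝ)
    (iL : Fin n) (k : ℕ) (i : Fin n) : Prop :=
  ∃ t : ℝ, InLk I d pos iL k t ∧ IsLM I d pos t i

/-- `i` is `LM^k`: the rectangle of `R^k` with smallest `x`-coordinate,
ties broken by largest `y`-coordinate. -/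
def IsLMk {n : ℕ} (I : SPInstance n) (d : FQW I) (pos : Fin n → ℝ × ℝ)
    (iL : Fin n) (k : ℕ) (i : Fin n) : Prop :=
  InRk I d pos iL k i ∧ ∀ j : Fin n, InRk I d pos iL k j →
    (pos i).1 < (pos j).1 ∨ ((pos i).1 = (pos j).1 ∧ (pos j).2 ≤ (pos i).2)

/-- `v = x_F^ℓ` for the line `ℓ` at height `t`: the right face `x + w` of the
rightmost rectangle of `F` intersecting `ℓ`, and `0` if there is none. -/
def IsXF {n : ℕ} (I : SPInstance n) (d : FQW I) (pos : Fin n → ℝ × ℝ)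
    (t v : ℝ) : Prop :=
  ((∃ f ∈ d.F, I.Intersects pos f t ∧ v = (pos f).1 + (I.r f).w) ∧
    ∀ f ∈ d.F, I.Intersects pos f t → (pos f).1 + (I.r f).w ≤ v) ∨
  ((∀ f ∈ d.F, ¬ I.Intersects pos f t) ∧ v = 0)

/-!
If no rectangle of `Q` touches the left boundary, then `r_L = r_T`, and `H_j` lies between the
bottom face of `r_T` (placed before `r_j`) and its top face (which is at least the top of `r_j`).

Otherwise let `ℓ` be a proper line in `H_j`. The rectangles placed before `r_j` whose top face
reaches `y_j` all cross `ℓ`, and by the BL rule every window of width `w_j` in the strip overlaps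
one of them, since `r_j` would have been placed lower otherwise. None of them belongs to `F`, so
they are rectangles of `Q` at least as wide as `r_j`, and one of them touches the left boundary.
Such a family of intervals covers at least half of `[0, W]`: every gap is shorter than `w_j` and
comes right after an interval of length at least `w_j`.
-/

open Set

theorem Finset.exists_between_of_forall_lt {ι α : Type*} [LinearOrder α] (s : Finset ι)
    (f : ι → α) {a y : α} (hay : a < y) (hf : ∀ i ∈ s, f i < y) :
    ∃ u, a ≤ u ∧ (∀ i ∈ s, f i ≤ u) ∧ u < y := by
  classical
  set T := insert a (s.image f)
  have hT : T.Nonempty := Finset.insert_nonempty _ _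
  refine ⟨T.max' hT, T.le_max' _ (Finset.mem_insert_self _ _),
    fun i hi => T.le_max' _ (Finset.mem_insert_of_mem (Finset.mem_image_of_mem f hi)), ?_⟩
  refine (T.max'_lt_iff hT).2 fun z hz => ?_
  rcases Finset.mem_insert.1 hz with rfl | hz
  · exact hay
  · obtain ⟨i, hi, rfl⟩ := Finset.mem_image.1 hz
    exact hf i hi

theorem disjoint_Ioo_iff_of_lt {a₁ a₂ b₁ b₂ : ℝ} (ha : a₁ < a₂) (hb : b₁ < b₂) :
    Disjoint (Ioo a₁ a₂) (Ioo b₁ b₂) ↔ a₂ ≤ b₁ ∨ b₂ ≤ a₁ := by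
  rw [Ioo_disjoint_Ioo, min_le_iff, le_max_iff, le_max_iff]
  constructor
  · rintro ((h | h) | (h | h)) <;> first | (left; linarith) | (right; linarith)
  · rintro (h | h)
    · exact Or.inl (Or.inr h)
    · exact Or.inr (Or.inl h)

namespace SPInstance

variable {n : ℕ} {I : SPInstance n} {pos : Fin n → ℝ × ℝ}

theorem disjoint_openBox_iff (I : SPInstance n) {i k : Fin n} {p q : ℝ × ℝ} :
    Disjoint (openBox (I.r i) p) (openBox (I.r k) q) ↔
      (p.1 + (I.r i).w ≤ q.1 ∨ q.1 + (I.r k).w ≤ p.1) ∨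
        (p.2 + (I.r i).h ≤ q.2 ∨ q.2 + (I.r k).h ≤ p.2) := by
  rw [openBox, openBox, disjoint_prod,
    disjoint_Ioo_iff_of_lt (by linarith [I.w_pos i]) (by linarith [I.w_pos k]),
    disjoint_Ioo_iff_of_lt (by linarith [I.h_pos i]) (by linarith [I.h_pos k])]

theorem IsBL.inStrip (hBL : I.IsBL pos) (i : Fin n) : I.InStrip i (pos i) :=
  (hBL i).1.1

theorem IsBL.separated (hBL : I.IsBL pos) {i k : Fin n} (hik : i ≠ k) :
    ((pos i).1 + (I.r i).w ≤ (pos k).1 ∨ (pos k).1 + (I.r k).w ≤ (pos i).1) ∨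
      ((pos i).2 + (I.r i).h ≤ (pos k).2 ∨ (pos k).2 + (I.r k).h ≤ (pos i).2) := by
  refine I.disjoint_openBox_iff.1 ?_
  rcases lt_or_gt_of_ne hik with h | h
  · exact ((hBL k).1.2 i h).symm
  · exact (hBL i).1.2 k h

theorem IsBL.pos_eq_zero_of_val_eq_zero (hBL : I.IsBL pos) {i : Fin n} (hi : (i : ℕ) = 0) :
    pos i = (0, 0) := by
  have hfeas : I.FeasibleAt pos i (0, 0) :=
    ⟨⟨le_rfl, by simpa using I.w_le_W i, le_rfl⟩,
      fun k hk => absurd hk (by simp [Fin.lt_def, hi])⟩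
  have h0 := hBL.inStrip i
  rcases (hBL i).2 _ hfeas with h | ⟨h1, h2⟩
  · exact absurd h (by simpa using h0.2.2)
  · exact Prod.ext (le_antisymm h2 h0.1) h1

noncomputable def blockers (I : SPInstance n) (pos : Fin n → ℝ × ℝ) (j : Fin n) :
    Finset (Fin n) :=
  Finset.univ.filter fun k => k < j ∧ (pos j).2 ≤ (pos k).2 + (I.r k).h

theorem mem_blockers {j k : Fin n} :
    k ∈ I.blockers pos j ↔ k < j ∧ (pos j).2 ≤ (pos k).2 + (I.r k).h := by
  simp [blockers]

/-- A window free of blockers would let the BL rule place `j` lower. -/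
theorem IsBL.exists_mem_blockers_overlap (hBL : I.IsBL pos) {j : Fin n} (hyj : 0 < (pos j).2)
    {x : ℝ} (hx : 0 ≤ x) (hxW : x + (I.r j).w ≤ I.W) :
    ∃ k ∈ I.blockers pos j, (pos k).1 < x + (I.r j).w ∧ x < (pos k).1 + (I.r k).w := by
  by_contra! hno
  set S := Finset.univ.filter fun k : Fin n =>
    k < j ∧ (pos k).1 < x + (I.r j).w ∧ x < (pos k).1 + (I.r k).w
  obtain ⟨u, hu0, huS, huj⟩ := S.exists_between_of_forall_lt (fun k => (pos k).2 + (I.r k).h)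
    hyj fun k hk => by
      simp only [S, Finset.mem_filter, Finset.mem_univ, true_and] at hk
      by_contra! hle
      exact (hno k (mem_blockers.2 ⟨hk.1, hle⟩) hk.2.1).not_gt hk.2.2
  have hfeas : I.FeasibleAt pos j (x, u) := by
    refine ⟨⟨hx, hxW, hu0⟩, fun k hk => I.disjoint_openBox_iff.2 ?_⟩
    by_cases hkS : k ∈ S
    · exact Or.inr (Or.inr (huS k hkS))
    · simp only [S, Finset.mem_filter, Finset.mem_univ, true_and, not_and, not_lt] at hkS
      by_cases h : (pos k).1 < x + (I.r j).w
      · exact Or.inl (Or.inr (hkS hk h))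
      · exact Or.inl (Or.inl (not_lt.1 h))
  rcases (hBL j).2 _ hfeas with h | h
  · exact h.not_gt huj
  · exact huj.ne' h.1

theorem IsBL.exists_leftSupporter (hBL : I.IsBL pos) {i : Fin n} (hx : 0 < (pos i).1) :
    ∃ b, I.IsLeftSupporter pos i b := by
  by_contra! hno
  set D := Finset.univ.filter fun k : Fin n => k < i ∧ (pos k).1 + (I.r k).w < (pos i).1
  obtain ⟨u, hu0, huD, hui⟩ := D.exists_between_of_forall_lt (fun k => (pos k).1 + (I.r k).w)
    hx fun k hk => (Finset.mem_filter.1 hk).2.2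
  have hi := hBL.inStrip i
  have hfeas : I.FeasibleAt pos i (u, (pos i).2) := by
    refine ⟨⟨hu0, by linarith [hi.2.1], hi.2.2⟩, fun k hk => I.disjoint_openBox_iff.2 ?_⟩
    rcases I.disjoint_openBox_iff.1 ((hBL i).1.2 k hk) with (h | h) | h
    · exact Or.inl (Or.inl (by simp only; linarith))
    · rcases h.lt_or_eq with hlt | heq
      · exact Or.inl (Or.inr (huD k (by simp [D, hk, hlt])))
      · by_contra! hov
        exact hno k ⟨hk, heq, by simpa using hov.2.1, by simpa using hov.2.2⟩
    · exact Or.inr h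
  rcases (hBL i).2 _ hfeas with h | h
  · exact h.false
  · exact hui.not_ge h.2

end SPInstance

namespace SPInstance

variable {n : ℕ} {I : SPInstance n} {pos : Fin n → ℝ × ℝ}

theorem greedyF_sum_le (I : SPInstance n) (σ : Equiv.Perm (Fin n)) :
    ∑ f ∈ I.greedyF σ, (I.r f).w ≤ I.W := by
  suffices h : ∀ (L : List (Fin n)) (F : Finset (Fin n)), ∑ f ∈ F, (I.r f).w ≤ I.W →
      ∑ f ∈ L.foldl (fun F k =>
        if (I.r (σ k)).w + ∑ f ∈ F, (I.r f).w ≤ I.W then insert (σ k) F else F) F,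
        (I.r f).w ≤ I.W from
    h _ ∅ (by simpa using I.W_pos.le)
  intro L
  induction L with
  | nil => exact fun F hF => hF
  | cons k L ih =>
    intro F hF
    refine ih _ ?_
    dsimp only
    split_ifs with h
    · by_cases hmem : σ k ∈ F
      · rwa [Finset.insert_eq_of_mem hmem]
      · rwa [Finset.sum_insert hmem]
    · exact hF

/-- By induction, the rectangles of `F` are placed side by side from the left, which fits
since their total width is at most `W`. -/
theorem IsBL.snd_eq_zero_of_lt_card_F {d : FQW I} (hBL : I.IsBL pos) (hord : d.IsOrdered)
    {k : Fin n} (hk : (k : ℕ) < d.F.card) : (pos k).2 = 0 := by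
  suffices h : ∀ k : Fin n, (k : ℕ) < d.F.card →
      (pos k).2 = 0 ∧ (pos k).1 ≤ ∑ l ∈ Finset.Iio k, (I.r l).w from (h k hk).1
  intro k
  induction k using WellFoundedLT.induction with
  | _ k ih =>
  intro hk
  have hIicW : (I.r k).w + ∑ l ∈ Finset.Iio k, (I.r l).w ≤ I.W := by
    rw [Finset.add_sum_Iio_eq_sum_Iic (f := fun l => (I.r l).w)]
    refine le_trans (Finset.sum_le_sum_of_subset_of_nonneg (fun l hl => ?_)
      fun l _ _ => (I.w_pos l).le) (greedyF_sum_le I d.σ)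
    exact (hord.1 l).2 (lt_of_le_of_lt (Fin.le_def.1 (Finset.mem_Iic.1 hl)) hk)
  have hfeas : I.FeasibleAt pos k (∑ l ∈ Finset.Iio k, (I.r l).w, 0) := by
    refine ⟨⟨Finset.sum_nonneg fun l _ => (I.w_pos l).le, by simp only; linarith, le_rfl⟩,
      fun l hl => I.disjoint_openBox_iff.2 (Or.inl (Or.inr ?_))⟩
    obtain ⟨-, hxl⟩ := ih l hl (lt_trans hl hk)
    have hmono : ∑ m ∈ Finset.Iic l, (I.r m).w ≤ ∑ m ∈ Finset.Iio k, (I.r m).w :=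
      Finset.sum_le_sum_of_subset_of_nonneg
        (fun m hm => Finset.mem_Iio.2 (lt_of_le_of_lt (Finset.mem_Iic.1 hm) hl))
        fun m _ _ => (I.w_pos m).le
    rw [← Finset.add_sum_Iio_eq_sum_Iic] at hmono
    simp only
    linarith
  rcases (hBL k).2 _ hfeas with h | h
  · exact absurd h (not_lt.2 (hBL.inStrip k).2.2)
  · exact h

/-- Both rectangles overlap horizontally the first rectangle, which sits in the corner and is
the tallest of `F`. -/
theorem IsBL.top_le_of_lt_card_F {d : FQW I} (hBL : I.IsBL pos) (hord : d.IsOrdered)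
    {k l : Fin n} (hk : (k : ℕ) < d.F.card) (hl : d.F.card ≤ (l : ℕ)) (hl0 : (pos l).1 = 0) :
    (pos k).2 + (I.r k).h ≤ (pos l).2 := by
  set z : Fin n := ⟨0, by omega⟩
  have hz : pos z = (0, 0) := hBL.pos_eq_zero_of_val_eq_zero rfl
  have hzl : z ≠ l := fun h => by simp [z, Fin.ext_iff] at h; omega
  have hkz : (I.r k).h ≤ (I.r z).h := hord.2.2.1 z k (Nat.zero_le _) hk
  have hyk := hBL.snd_eq_zero_of_lt_card_F hord hk
  rcases hBL.separated hzl with (h | h) | (h | h) <;> simp only [hz] at h <;>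
    linarith [I.w_pos z, I.w_pos l, I.h_pos l, (hBL.inStrip l).2.2]

end SPInstance

section IntervalCover

theorem volume_real_inter_Icc_add_le {U : Set ℝ} {e c d : ℝ} (hc : 0 ≤ c) (hec : e ≤ c)
    (hcd : c ≤ d) (hU : Icc c d ⊆ U) :
    volume.real (U ∩ Icc 0 e) + (d - c) ≤ volume.real (U ∩ Icc 0 d) := by
  have hdisj : Disjoint (U ∩ Icc 0 e) (Ioc c d) :=
    disjoint_left.2 fun x hx hx' => by linarith [hx.2.2, hx'.1]
  have hsub : U ∩ Icc 0 e ∪ Ioc c d ⊆ U ∩ Icc 0 d :=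
    union_subset (fun x hx => ⟨hx.1, hx.2.1, hx.2.2.trans (hec.trans hcd)⟩)
      fun x hx => ⟨hU (Ioc_subset_Icc_self hx), hc.trans hx.1.le, hx.2⟩
  calc volume.real (U ∩ Icc 0 e) + (d - c) = volume.real (U ∩ Icc 0 e ∪ Ioc c d) := by
        rw [measureReal_union hdisj measurableSet_Ioc
          ((measure_mono inter_subset_right).trans_lt measure_Icc_lt_top).ne measure_Ioc_lt_top.ne,
          Real.volume_real_Ioc_of_le hcd]
    _ ≤ volume.real (U ∩ Icc 0 d) :=
        measureReal_mono hsub ((measure_mono inter_subset_right).trans_lt measure_Icc_lt_top).ne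

variable {ι : Type*} {K : Finset ι} {A B : ι → ℝ} {w W : ℝ}

/-- The inductive step: with `α` the leftmost start among the intervals reaching `B i`, the
segment `[α, B i]` is covered, and a window just left of `α` meets an interval ending before
`B i`, to which the induction hypothesis applies. -/
theorem add_le_two_mul_volume_real_of_forall_lt (hw : 0 ≤ w)
    (hAB : ∀ i ∈ K, A i + w ≤ B i) (hA : ∀ i ∈ K, 0 ≤ A i) (hB : ∀ i ∈ K, B i ≤ W)
    (h0 : ∃ i ∈ K, A i = 0)
    (hwin : ∀ x, 0 ≤ x → x + w ≤ W → ∃ i ∈ K, A i < x + w ∧ x < B i)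
    {i : ι} (hi : i ∈ K) (ih : ∀ k ∈ K, B k < B i →
      B k + w ≤ 2 * volume.real ((⋃ l ∈ K, Icc (A l) (B l)) ∩ Icc 0 (B k))) :
    B i + w ≤ 2 * volume.real ((⋃ l ∈ K, Icc (A l) (B l)) ∩ Icc 0 (B i)) := by
  classical
  set U := ⋃ l ∈ K, Icc (A l) (B l)
  have hmemU : ∀ k ∈ K, Icc (A k) (B k) ⊆ U := fun k hk =>
    subset_biUnion_of_mem (u := fun l => Icc (A l) (B l)) (Finset.mem_coe.2 hk)
  obtain ⟨i₀, hi₀, hmin⟩ := (K.filter (B i ≤ B ·)).exists_min_image A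
    ⟨i, Finset.mem_filter.2 ⟨hi, le_rfl⟩⟩
  rw [Finset.mem_filter] at hi₀
  have hαi : A i₀ ≤ A i := hmin i (Finset.mem_filter.2 ⟨hi, le_rfl⟩)
  have hcov : Icc (A i₀) (B i) ⊆ U := (Icc_subset_Icc_right hi₀.2).trans (hmemU _ hi₀.1)
  have hAi := hA i hi
  have hABi := hAB i hi
  rcases lt_or_ge (A i₀) w with hsmall | hsmall
  · obtain ⟨z, hz, hz0⟩ := h0
    have hcov0 : Icc 0 (B i) ⊆ U := fun x hx =>
      if hxz : x ≤ B z then hmemU z hz ⟨hz0 ▸ hx.1, hxz⟩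
      else hcov ⟨by linarith [hAB z hz], hx.2⟩
    linarith [volume_real_inter_Icc_add_le le_rfl le_rfl (by linarith) hcov0,
      measureReal_nonneg (μ := volume) (s := U ∩ Icc 0 0)]
  · obtain ⟨i₁, hi₁, hA₁, hB₁⟩ := hwin (A i₀ - w) (by linarith)
      (by linarith [hAB i₀ hi₀.1, hB i₀ hi₀.1])
    have hlt : B i₁ < B i := by
      by_contra! h
      linarith [hmin i₁ (Finset.mem_filter.2 ⟨hi₁, h⟩)]
    have hc := volume_real_inter_Icc_add_le (U := U) (c := max (A i₀) (B i₁))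
      (le_max_of_le_left (hA _ hi₀.1)) (le_max_right _ _) (max_le (by linarith) hlt.le)
      ((Icc_subset_Icc_left (le_max_left _ _)).trans hcov)
    have := ih i₁ hi₁ hlt
    rcases max_choice (A i₀) (B i₁) with h | h <;> rw [h] at hc <;> linarith

theorem le_two_mul_volume_real_biUnion_Icc (hw : 0 ≤ w)
    (hAB : ∀ i ∈ K, A i + w ≤ B i) (hA : ∀ i ∈ K, 0 ≤ A i) (hB : ∀ i ∈ K, B i ≤ W)
    (h0 : ∃ i ∈ K, A i = 0)
    (hwin : ∀ x, 0 ≤ x → x + w ≤ W → ∃ i ∈ K, A i < x + w ∧ x < B i) :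
    W ≤ 2 * volume.real (⋃ i ∈ K, Icc (A i) (B i)) := by
  classical
  set U := ⋃ i ∈ K, Icc (A i) (B i)
  have hstep : ∀ i ∈ K, B i + w ≤ 2 * volume.real (U ∩ Icc 0 (B i)) := by
    by_contra! hbad
    obtain ⟨i, hi, hmin⟩ := (K.filter fun i => 2 * volume.real (U ∩ Icc 0 (B i)) < B i + w
      ).exists_min_image B (by simpa [Finset.filter_nonempty_iff] using hbad)
    rw [Finset.mem_filter] at hi
    refine hi.2.not_ge (add_le_two_mul_volume_real_of_forall_lt hw hAB hA hB h0 hwin hi.1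
      fun k hk hlt => ?_)
    by_contra! h
    exact hlt.not_ge (hmin k (Finset.mem_filter.2 ⟨hk, h⟩))
  obtain ⟨z, hz, -⟩ := h0
  obtain ⟨m, hm, hmax⟩ := K.exists_max_image B ⟨z, hz⟩
  have hW : W < B m + w := by
    by_contra! h
    obtain ⟨k, hk, -, hk'⟩ := hwin (B m) (by linarith [hA m hm, hAB m hm]) h
    linarith [hmax k hk]
  have hUW : U ⊆ Icc 0 W := iUnion₂_subset fun k hk => Icc_subset_Icc (hA k hk) (hB k hk)
  calc W ≤ B m + w := hW.le
    _ ≤ 2 * volume.real (U ∩ Icc 0 (B m)) := hstep m hm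
    _ ≤ 2 * volume.real U := by
        gcongr
        · exact ((measure_mono hUW).trans_lt (measure_Icc_lt_top (μ := volume))).ne
        · exact inter_subset_left

end IntervalCover

theorem le_maxYBelow {n : ℕ} (pos : Fin n → ℝ × ℝ) {k : Fin n} {i : ℕ}
    (hk : (k : ℕ) < i) : (pos k).2 ≤ maxYBelow pos i :=
  le_ciSup (f := fun j : {j : Fin n // (j : ℕ) < i} => (pos j).2) (Set.finite_range _).bddAbove
    ⟨k, hk⟩

namespace SPInstance

variable {n : ℕ} {I : SPInstance n} {pos : Fin n → ℝ × ℝ}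

/-- If no blocker of `j` touched the left boundary, the leftmost blocker `M` would have a left
supporter `b`; both rest above the rectangle `l` in the corner, so `b` lies outside `F` and is at
least as wide as `j`, yet it fits left of `M`, within the first `w_j` of the strip. -/
theorem IsBL.exists_mem_blockers_fst_eq_zero (hBL : I.IsBL pos) {l j : Fin n}
    (hl0 : (pos l).1 = 0) (hwl : (I.r j).w ≤ (I.r l).w) (hyl : (pos l).2 < (pos j).2)
    (hw : ∀ k < j, 0 < (pos k).2 → (I.r j).w ≤ (I.r k).w) :
    ∃ k ∈ I.blockers pos j, (pos k).1 = 0 := by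
  have hyl0 := (hBL.inStrip l).2.2
  have hyj : 0 < (pos j).2 := hyl0.trans_lt hyl
  by_contra! hno
  obtain ⟨k₀, hk₀, hk₀x, -⟩ :=
    hBL.exists_mem_blockers_overlap hyj le_rfl (by simpa using I.w_le_W j)
  obtain ⟨M, hM, hMmin⟩ :=
    (I.blockers pos j).exists_min_image (fun k => (pos k).1) ⟨k₀, hk₀⟩
  obtain ⟨hMj, hMtop⟩ := mem_blockers.1 hM
  have hMx : 0 < (pos M).1 := lt_of_le_of_ne (hBL.inStrip M).1 (hno M hM).symm
  have hMw : (pos M).1 < (I.r j).w := by linarith [hMmin k₀ hk₀]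
  obtain ⟨b, hbM, hbx, hby₁, hby₂⟩ := hBL.exists_leftSupporter hMx
  have hxb := (hBL.inStrip b).1
  have hlM : (pos l).2 + (I.r l).h ≤ (pos M).2 := by
    rcases hBL.separated (i := M) (k := l) (by rintro rfl; linarith) with (h | h) | (h | h) <;>
      linarith [I.w_pos M]
  have hlb : (pos l).2 + (I.r l).h ≤ (pos b).2 := by
    rcases hBL.separated (i := b) (k := l) (by rintro rfl; linarith) with (h | h) | (h | h) <;>
      linarith [I.w_pos b, I.h_pos l]
  have hwb := hw b (hbM.trans hMj) (by linarith [I.h_pos l])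
  linarith

theorem occupied_subset_Icc (hBL : I.IsBL pos) (t : ℝ) : I.occupied pos t ⊆ Set.Icc 0 I.W := by
  intro x hx
  obtain ⟨k, -, hxk⟩ := Set.mem_iUnion₂.1 hx
  exact ⟨(hBL.inStrip k).1.trans hxk.1, hxk.2.trans (hBL.inStrip k).2.1⟩

theorem biUnion_blockers_subset_occupied {j : Fin n} {t : ℝ} (ht : I.ProperLine pos t)
    (hmax : maxYBelow pos j ≤ t) (htj : t < (pos j).2) :
    ⋃ k ∈ I.blockers pos j, Set.Icc (pos k).1 ((pos k).1 + (I.r k).w) ⊆ I.occupied pos t :=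
  Set.biUnion_mono (fun k hk => by
    obtain ⟨hkj, hk⟩ := mem_blockers.1 hk
    exact ⟨lt_of_le_of_ne ((le_maxYBelow pos hkj).trans hmax) (ht k).1.symm, htj.trans_le hk⟩)
    fun _ _ => le_rfl

theorem IsBL.half_le_occFrac {d : FQW I} (hBL : I.IsBL pos) (hord : d.IsOrdered) {l j : Fin n}
    (hl : d.F.card ≤ (l : ℕ)) (hlj : l < j) (hj : (j : ℕ) < d.F.card + d.Q.card)
    (hl0 : (pos l).1 = 0) {t : ℝ} (ht : I.ProperLine pos t) (hmax : maxYBelow pos j ≤ t)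
    (htj : t < (pos j).2) : 1 / 2 ≤ I.occFrac pos t := by
  have hyl : (pos l).2 < (pos j).2 := ((le_maxYBelow pos hlj).trans hmax).trans_lt htj
  have hyj : 0 < (pos j).2 := (hBL.inStrip l).2.2.trans_lt hyl
  have hwidth : ∀ k : Fin n, d.F.card ≤ (k : ℕ) → k ≤ j → (I.r j).w ≤ (I.r k).w :=
    fun k h₁ h₂ => hord.2.2.2 k j h₁ h₂ hj
  have hblockersQ : ∀ k ∈ I.blockers pos j, d.F.card ≤ (k : ℕ) := fun k hk => by
    by_contra! h
    linarith [hBL.top_le_of_lt_card_F hord h hl hl0, (mem_blockers.1 hk).2]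
  have hcover := le_two_mul_volume_real_biUnion_Icc (K := I.blockers pos j)
    (A := fun k => (pos k).1) (B := fun k => (pos k).1 + (I.r k).w) (I.w_pos j).le
    (fun k hk => by linarith [hwidth k (hblockersQ k hk) (mem_blockers.1 hk).1.le])
    (fun k _ => (hBL.inStrip k).1) (fun k _ => (hBL.inStrip k).2.1)
    (hBL.exists_mem_blockers_fst_eq_zero hl0 (hwidth l hl hlj.le) hyl fun k hk hyk =>
      hwidth k (not_lt.1 fun h => hyk.ne' (hBL.snd_eq_zero_of_lt_card_F hord h)) hk.le)
    fun x hx hxW => hBL.exists_mem_blockers_overlap hyj hx hxW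
  have hocc := measureReal_mono (μ := volume) (biUnion_blockers_subset_occupied ht hmax htj)
    ((measure_mono (occupied_subset_Icc hBL t)).trans_lt measure_Icc_lt_top).ne
  rw [occFrac, ← measureReal_def, le_div_iff₀ I.W_pos]
  linarith

end SPInstance

theorem regionH_subset_Hprime {n : ℕ} {I : SPInstance n} {d : FQW I} {pos : Fin n → ℝ × ℝ}
    {iT j : Fin n} (hiT : IsTopRect I d pos iT) (hjQ : j ∈ d.Q) (hTj : iT < j) :
    I.regionH pos j ⊆ Hprime I pos iT := by
  rintro ⟨x, y⟩ ⟨hx, hy₁, hy₂⟩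
  refine ⟨hx, Or.inr ⟨(le_maxYBelow pos hTj).trans hy₁, ?_⟩⟩
  rcases hiT.2 j hjQ with h | ⟨h, -⟩ <;> simp only at hy₂ ⊢ <;> linarith [I.h_pos j]

/-- In `0`-based indexing, the regions `H_i` with `L + 1 ≤ i ≤ a + b` are those of the
rectangles `j` with `iL < j` and `j < a + b`. -/
theorem H_above_left_rect_general {n : ℕ} (I : SPInstance n) (d : FQW I)
    (hord : d.IsOrdered) (pos : Fin n → ℝ × ℝ) (hBL : I.IsBL pos)
    (iT iL : Fin n) (hiT : IsTopRect I d pos iT)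
    (hiL : IsLeftRect I d pos iT iL)
    (j : Fin n) (hj₁ : iL < j) (hj₂ : (j : ℕ) < d.F.card + d.Q.card) :
    I.regionH pos j ⊆ Hprime I pos iT ∨
    (∀ t : ℝ, I.ProperLine pos t → maxYBelow pos (j : ℕ) ≤ t → t < (pos j).2 →
      1 / 2 ≤ I.occFrac pos t) := by
  rcases hiL with ⟨hiLQ, hiL0, -⟩ | ⟨-, rfl⟩
  · exact Or.inr fun t ht hmax htj =>
      hBL.half_le_occFrac hord ((hord.2.1 iL).1 hiLQ).1 hj₁ hj₂ hiL0 ht hmax htj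
  · have hjQ : j ∈ d.Q := (hord.2.1 j).2 ⟨((hord.2.1 iL).1 hiT.1).1.trans hj₁.le, hj₂⟩
    exact Or.inl (regionH_subset_Hprime hiT hjQ hj₁)

/-- **Lemma.** For `L + 1 ≤ i ≤ a + b` (1-based), either the region `H_i` is
contained in `H'`, or every proper horizontal line in `H_i` is at least half
occupied.  In 0-based indexing these are the regions of the rectangles `j ∈ Q`
with `iL < j`. -/
theorem H_above_left_rect {n : ℕ} (I : SPInstance n) (d : FQW I)
    (hord : d.IsOrdered) (pos : Fin n → ℝ × ℝ) (hBL : I.IsBL pos)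
    (hQ : d.Q.Nonempty) (iT iL : Fin n) (hiT : IsTopRect I d pos iT)
    (hiL : IsLeftRect I d pos iT iL)
    (j : Fin n) (hj₁ : iL < j) (hj₂ : (j : ℕ) < d.F.card + d.Q.card) :
    I.regionH pos j ⊆ Hprime I pos iT ∨
    (∀ t : ℝ, I.ProperLine pos t → maxYBelow pos (j : ℕ) ≤ t → t < (pos j).2 →
      1 / 2 ≤ I.occFrac pos t) :=
  H_above_left_rect_general I d hord pos hBL iT iL hiT hiL j hj₁ hj₂
end

section
/- Let (W, r_1, …, r_n) be a Strip Packing instance whose rectangles are listed in the FQW-ordering with Q ≠ ∅, and consider its BL packing. Let ℓ and ℓ' be proper horizontal lines in H_{a+2} ∪ ⋯ ∪ H_L with ℓ at a strictly smaller height than ℓ'. If r ∈ T(ℓ) and r' ∈ T(ℓ') with r' ∉ T(ℓ), then w_r ≥ w_{r'}. -/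
open scoped Classical
open MeasureTheory

/-- **Lemma (decreasing widths).** Let `ℓ < ℓ'` be proper horizontal lines in
`H_{a+2} ∪ ⋯ ∪ H_L`.  If `r ∈ T(ℓ)`, `r' ∈ T(ℓ')` and `r' ∉ T(ℓ)`, then
`w_r ≥ w_{r'}`. -/
theorem type_widths_decrease {n : ℕ} (I : SPInstance n) (d : FQW I)
    (hord : d.IsOrdered) (pos : Fin n → ℝ × ℝ) (hBL : I.IsBL pos)
    (hQ : d.Q.Nonempty) (iT iL : Fin n) (hiT : IsTopRect I d pos iT)
    (hiL : IsLeftRect I d pos iT iL)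
    (t t' : ℝ) (hproper : I.ProperLine pos t) (hproper' : I.ProperLine pos t')
    (hline : LineInHUnion I d pos iL t) (hline' : LineInHUnion I d pos iL t')
    (hlt : t < t')
    (r : Fin n) (hr : r ∈ TypeOf I d pos t)
    (r' : Fin n) (hr' : r' ∈ TypeOf I d pos t') (hr'n : r' ∉ TypeOf I d pos t) :
    (I.r r').w ≤ (I.r r).w := by
  simp only [TypeOf, Finset.mem_filter, Finset.mem_univ, true_and] at hr hr' hr'n
  obtain ⟨hrQ, hri, hrall⟩ := hr
  obtain ⟨hr'Q, hr'i, hr'all⟩ := hr'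
  -- First show r ≤ r' as indices.
  have hle : (r : ℕ) ≤ (r' : ℕ) := by
    by_contra hlt'
    push_neg at hlt'
    have hle' : r' ≤ r := le_of_lt (by exact_mod_cast hlt')
    have hy : (pos r').2 ≤ t := hrall r' hle'
    have hy' : (pos r').2 < t := lt_of_le_of_ne hy (fun h => (hproper r').1 h.symm)
    have htop : t < (pos r').2 + (I.r r').h := by
      by_contra htop
      push_neg at htop
      have := hr'i.2
      linarith
    exact hr'n ⟨hr'Q, ⟨hy', htop⟩, fun j hj => hrall j (le_trans hj hle')⟩
  -- Q membership bounds from the ordering.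
  have hrQ' := (hord.2.1 r).mp hrQ
  have hr'Q' := (hord.2.1 r').mp hr'Q
  exact hord.2.2.2 r r' hrQ'.1 hle hr'Q'.2
end

section
/- Let (α_k)_{k≥1} and (β_k)_{k≥1} be summable sequences of real numbers satisfying 0 ≤ α_k ≤ 1/2 for all k, ∑_{k=1}^∞ α_k = 1, 0 ≤ β_k ≤ 1/(2k+1) for all k, and ∑_{k=1}^∞ β_k ≤ 1. Then ∑_{k=1}^∞ ( α_k β_k + (1/2) α_k (1 − ∑_{j=k}^∞ β_j) ) ≤ 7/12, and this bound is attained for α_1 = α_2 = 1/2, α_k = 0 for k ≥ 3, β_1 = 1/3 and β_k = 0 for k ≥ 2. -/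
/-! Write `T k = ∑_{j ≥ k} β j`. Since `∑ α = 1`, the objective is `1/2 + ∑ α_k d_k` with
`d_k = β_k - T_k / 2`. From `β_l ≤ T_l` and `β_k + β_l ≤ T_k` for `k < l`, any two distinct
`d_k + d_l` are at most `β_k / 2 ≤ 1/6`. So at most one `d_m` exceeds `1/12`, and since its
weight is at most `1/2`, what it gains over `1/12` is outweighed by what the others lose:
`∑ α_k d_k ≤ 1/12`. The extremal sequences give `d_1 = 1/6`, `d_2 = 0`. -/

theorem tsum_mul_le_of_pairwise_add_le {ι : Type*} {α d : ι → ℝ} {c : ℝ}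
    (hα0 : ∀ k, 0 ≤ α k) (hα : ∀ k, α k ≤ 1 / 2) (hαs : Summable α) (hα1 : ∑' k, α k = 1)
    (hd : Summable fun k => α k * d k) (hpair : Pairwise fun k l => d k + d l ≤ 2 * c) :
    ∑' k, α k * d k ≤ c := by
  classical
  by_cases hle : ∀ k, d k ≤ c
  · calc ∑' k, α k * d k ≤ ∑' k, α k * c :=
          hd.tsum_le_tsum (fun k => mul_le_mul_of_nonneg_left (hle k) (hα0 k)) (hαs.mul_right c)
      _ = c := by rw [tsum_mul_right, hα1, one_mul]
  push Not at hle
  obtain ⟨m, hm⟩ := hle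
  -- every other `d k` is at most `2c - d m`; the excess of `d m` over that has weight `α m ≤ 1/2`
  have hbound : ∀ k,
      α k * d k ≤ α k * (2 * c - d m) + if k = m then α m * (2 * d m - 2 * c) else 0 := by
    intro k
    by_cases hk : k = m
    · subst hk
      exact le_of_eq (by rw [if_pos rfl]; ring)
    · rw [if_neg hk, add_zero]
      exact mul_le_mul_of_nonneg_left (by linarith [hpair hk]) (hα0 k)
  calc ∑' k, α k * d k
      ≤ ∑' k, (α k * (2 * c - d m) + if k = m then α m * (2 * d m - 2 * c) else 0) :=
        hd.tsum_le_tsum hbound ((hαs.mul_right _).add (hasSum_ite_eq m _).summable)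
    _ = 2 * c - d m + α m * (2 * d m - 2 * c) := by
        rw [(hαs.mul_right _).tsum_add (hasSum_ite_eq m _).summable, tsum_mul_right,
          tsum_ite_eq m fun _ => _, hα1, one_mul]
    _ ≤ c := by nlinarith [hα m]

section

variable {ι : Type*} [Preorder ι]

noncomputable def tailSum (β : ι → ℝ) (k : ι) : ℝ := ∑' j : {j : ι // k ≤ j}, β j

variable {β : ι → ℝ} {k l : ι}

lemma tailSum_le_tsum (hβ : ∀ j, 0 ≤ β j) (hs : Summable β) : tailSum β k ≤ ∑' j, β j :=
  hs.tsum_subtype_le β {j | k ≤ j} hβ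

lemma le_tailSum (hβ : ∀ j, 0 ≤ β j) (hs : Summable β) : β k ≤ tailSum β k :=
  (hs.subtype _).le_tsum (⟨k, le_rfl⟩ : {j // k ≤ j}) fun j _ => hβ j

lemma add_le_tailSum (hβ : ∀ j, 0 ≤ β j) (hs : Summable β) (hkl : k < l) :
    β k + β l ≤ tailSum β k := by
  classical
  have hne : (⟨k, le_rfl⟩ : {j // k ≤ j}) ≠ ⟨l, hkl.le⟩ := fun h => hkl.ne (congrArg Subtype.val h)
  have hsk : Summable fun j : {j // k ≤ j} => β j := hs.subtype _
  simpa [tailSum, Finset.sum_pair hne] using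
    hsk.sum_le_tsum {⟨k, le_rfl⟩, ⟨l, hkl.le⟩} fun (j : {j // k ≤ j}) _ => hβ j

lemma tailSum_ite_eq [DecidableEq ι] [DecidableLE ι] (a : ι) (c : ℝ) :
    tailSum (fun j => if j = a then c else 0) k = if k ≤ a then c else 0 := by
  unfold tailSum
  split_ifs with hka
  · rw [tsum_eq_single ⟨a, hka⟩ fun j hj => if_neg fun h => hj (Subtype.ext h), if_pos rfl]
  · refine (tsum_congr fun j : {j // k ≤ j} => ?_).trans tsum_zero
    exact if_neg fun h : (j : ι) = a => hka (h ▸ j.2)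

end

section

variable {ι : Type*} [LinearOrder ι] {β : ι → ℝ}

lemma abs_sub_half_tailSum_le (hβ : ∀ j, 0 ≤ β j) (hs : Summable β) (k : ι) :
    |β k - tailSum β k / 2| ≤ ∑' j, β j := by
  have := le_tailSum (k := k) hβ hs
  have := tailSum_le_tsum (k := k) hβ hs
  rw [abs_le]; constructor <;> linarith [hβ k]

lemma sub_half_tailSum_add_le (hβ : ∀ j, 0 ≤ β j) (hs : Summable β) {b : ℝ}
    (hb : ∀ j, β j ≤ b) {k l : ι} (hkl : k ≠ l) :
    (β k - tailSum β k / 2) + (β l - tailSum β l / 2) ≤ b / 2 := by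
  wlog h : k < l generalizing k l
  · linarith [this hkl.symm (hkl.lt_or_gt.resolve_left h)]
  linarith [add_le_tailSum hβ hs h, le_tailSum (k := l) hβ hs, hb k]

end

noncomputable def objective {ι : Type*} [Preorder ι] (α β : ι → ℝ) : ℝ :=
  ∑' k, (α k * β k + 1 / 2 * α k * (1 - tailSum β k))

lemma one_div_two_mul_add_one_le_one_div_three (k : ℕ+) : 1 / (2 * ((k : ℕ) : ℝ) + 1) ≤ 1 / 3 := by
  gcongr
  have : (1 : ℝ) ≤ (k : ℕ) := Nat.one_le_cast.mpr k.pos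
  linarith

lemma objective_le {ι : Type*} [LinearOrder ι] {α β : ι → ℝ} {b : ℝ}
    (hαs : Summable α) (hβs : Summable β) (hα0 : ∀ k, 0 ≤ α k) (hα : ∀ k, α k ≤ 1 / 2)
    (hα1 : ∑' k, α k = 1) (hβ0 : ∀ k, 0 ≤ β k) (hb : ∀ k, β k ≤ b) :
    objective α β ≤ 1 / 2 + b / 4 := by
  set d := fun k => β k - tailSum β k / 2
  have hd : Summable fun k => α k * d k :=
    (hαs.mul_right (∑' j, β j)).of_norm_bounded fun k => by
      rw [Real.norm_eq_abs, abs_mul, abs_of_nonneg (hα0 k)]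
      exact mul_le_mul_of_nonneg_left (abs_sub_half_tailSum_le hβ0 hβs k) (hα0 k)
  calc objective α β = ∑' k, (α k / 2 + α k * d k) := tsum_congr fun k => by ring
    _ = 1 / 2 + ∑' k, α k * d k := by rw [(hαs.div_const 2).tsum_add hd, tsum_div_const, hα1]
    _ ≤ 1 / 2 + b / 4 := by
      gcongr
      exact tsum_mul_le_of_pairwise_add_le hα0 hα hαs hα1 hd fun k l hkl =>
        (sub_half_tailSum_add_le hβ0 hβs hb hkl).trans_eq (by ring)

lemma objective_extremal : objective (fun m : ℕ+ => if m ≤ 2 then (1 : ℝ) / 2 else 0)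
    (fun m => if m = 1 then 1 / 3 else 0) = 7 / 12 := by
  unfold objective
  simp only [tailSum_ite_eq]
  rw [tsum_eq_sum (s := Finset.Iic 2) fun k hk => by simp [Finset.mem_Iic.not.mp hk],
    show Finset.Iic (2 : ℕ+) = {1, 2} by decide, Finset.sum_pair (by decide)]
  norm_num

/-- **Lemma (the quadratic program).** For summable sequences `(α_k)_{k ≥ 1}`
and `(β_k)_{k ≥ 1}` with `0 ≤ α_k ≤ 1/2`, `∑ α_k = 1`, `0 ≤ β_k ≤ 1/(2k+1)`
and `∑ β_k ≤ 1`, the objective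
`∑_k (α_k β_k + (1/2) α_k (1 − ∑_{j ≥ k} β_j))` is at most `7/12`; and the
bound is attained for `α_1 = α_2 = 1/2`, `α_k = 0` for `k ≥ 3`, `β_1 = 1/3`
and `β_k = 0` for `k ≥ 2`. -/
theorem quadratic_program_value :
    (∀ α β : ℕ+ → ℝ, Summable α → Summable β →
      (∀ k : ℕ+, 0 ≤ α k) → (∀ k : ℕ+, α k ≤ 1 / 2) →
      (∑' k : ℕ+, α k) = 1 →
      (∀ k : ℕ+, 0 ≤ β k) → (∀ k : ℕ+, β k ≤ 1 / (2 * ((k : ℕ) : ℝ) + 1)) →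
      (∑' k : ℕ+, β k) ≤ 1 →
      (∑' k : ℕ+, (α k * β k +
          1 / 2 * α k * (1 - ∑' j : {j : ℕ+ // k ≤ j}, β (j : ℕ+)))) ≤ 7 / 12) ∧
    (∑' k : ℕ+,
        ((fun m : ℕ+ => if m ≤ 2 then (1 : ℝ) / 2 else 0) k *
            (fun m : ℕ+ => if m = 1 then (1 : ℝ) / 3 else 0) k +
          1 / 2 * (fun m : ℕ+ => if m ≤ 2 then (1 : ℝ) / 2 else 0) k *
            (1 - ∑' j : {j : ℕ+ // k ≤ j},
              (fun m : ℕ+ => if m = 1 then (1 : ℝ) / 3 else 0) (j : ℕ+))))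
      = 7 / 12 := by
  refine ⟨fun α β hαs hβs hα0 hα hα1 hβ0 hβ _ => ?_, objective_extremal⟩
  calc objective α β ≤ 1 / 2 + 1 / 3 / 4 :=
        objective_le hαs hβs hα0 hα hα1 hβ0 fun k =>
          (hβ k).trans (one_div_two_mul_add_one_le_one_div_three k)
    _ = 7 / 12 := by norm_num
end
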